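/- arXiv:0706.0223 — 2 statements merged into one kernel-verified Lean document; each statement's English description precedes it below -/
import Mathlib

section
/- Let ε > 0 and let (n_j)_{j≥1} be a sequence of positive integers satisfying n_{j+1} > (1+ε)·n_j for all j ≥ 1. Let K = ⌈2·ε⁻¹⌉. Then the chromatic number of the distance graph G(S) with S = {n_j : j ≥ 1} is at most 4^K; in particular it is finite. -/
/-!
Split the sequence into the `K = ⌈2/ε⌉` interleaved subsequences `t ↦ n (i + 1 + t K)`; each
grows at least by the factor `(1 + ε)^K ≥ 1 + Kε ≥ 3`. For a sequence `m` with ratio at least `3`,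
nested intervals produce `α` with every `α m_t` at distance at least `1/4` from `ℤ`, so colouring
`z` by the quarter of `[0, 1)` containing `fract (α z)` is proper on its distance graph. The
product of these `K` colourings with `4` colours each is a proper colouring of `G(S)`.
-/

/-- The distance graph on `ℤ` associated to a set `S` of positive integers:
distinct integers `x, y` are adjacent iff `|x - y| ∈ S`. -/
def distGraph (S : Set ℕ) : SimpleGraph ℤ where
  Adj x y := x ≠ y ∧ (x - y).natAbs ∈ S
  symm := by
    constructor
    intro x y h
    refine ⟨h.1.symm, ?_⟩
    have : (y - x).natAbs = (x - y).natAbs := by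
      rw [← Int.natAbs_neg, neg_sub]
    rw [this]
    exact h.2
  loopless := by
    constructor
    intro x h
    exact h.1 rfl

open Set Int

/-- The least point `(k + 1/4) / M`, `k ∈ ℤ`, that is `≥ a`; on the interval of length `1/(2M)`
starting there, `α M` lies in `k + [1/4, 3/4]`. -/
noncomputable def quarterPoint (M a : ℝ) : ℝ := (⌈M * a - 1 / 4⌉ + 1 / 4) / M

section QuarterPoint

variable {M : ℝ} (a : ℝ)

lemma mul_quarterPoint (hM : M ≠ 0) : M * quarterPoint M a = ⌈M * a - 1 / 4⌉ + 1 / 4 :=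
  mul_div_cancel₀ _ hM

lemma le_quarterPoint (hM : 0 < M) : a ≤ quarterPoint M a := by
  rw [← mul_le_mul_iff_of_pos_left hM, mul_quarterPoint a hM.ne']
  linarith [le_ceil (M * a - 1 / 4)]

lemma quarterPoint_add_le (hM : 0 < M) :
    quarterPoint M a + 1 / (2 * M) ≤ a + 3 / (2 * M) := by
  rw [← mul_le_mul_iff_of_pos_left hM, mul_add, mul_add, mul_quarterPoint a hM.ne']
  have h₁ : M * (1 / (2 * M)) = 1 / 2 := by field_simp
  have h₃ : M * (3 / (2 * M)) = 3 / 2 := by field_simp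
  linarith [ceil_lt_add_one (M * a - 1 / 4)]

lemma fract_mul_mem_Icc_of_mem_Icc_quarterPoint (hM : 0 < M) {α : ℝ}
    (hα : α ∈ Icc (quarterPoint M a) (quarterPoint M a + 1 / (2 * M))) :
    fract (α * M) ∈ Icc (1 / 4 : ℝ) (3 / 4) := by
  obtain ⟨h₁, h₂⟩ := hα
  have hlo : (⌈M * a - 1 / 4⌉ : ℝ) + 1 / 4 ≤ α * M := by
    rw [← mul_quarterPoint a hM.ne', mul_comm α]
    exact mul_le_mul_of_nonneg_left h₁ hM.le
  have hhi : α * M ≤ (⌈M * a - 1 / 4⌉ : ℝ) + 3 / 4 := by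
    have := mul_le_mul_of_nonneg_left h₂ hM.le
    rw [mul_add, mul_quarterPoint a hM.ne', show M * (1 / (2 * M)) = 1 / 2 by field_simp] at this
    linarith
  have hfloor : ⌊α * M⌋ = ⌈M * a - 1 / 4⌉ := by
    rw [floor_eq_iff]
    constructor <;> linarith
  rw [← self_sub_floor, hfloor]
  constructor <;> linarith

end QuarterPoint

/-- Left endpoints of the intervals `[a_t, a_t + 1/(2 m_t)]`; they are nested once
`3 m_t ≤ m_{t+1}`, since `quarterPoint M a + 1/(2M) ≤ a + 3/(2M)`. -/
noncomputable def nestedLeft (m : ℕ → ℕ) : ℕ → ℝ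
  | 0 => quarterPoint (m 0) 0
  | t + 1 => quarterPoint (m (t + 1)) (nestedLeft m t)

lemma exists_fract_mul_mem_Icc_of_three_mul_le {m : ℕ → ℕ} (hpos : ∀ t, 0 < m t)
    (hgrow : ∀ t, 3 * m t ≤ m (t + 1)) :
    ∃ α : ℝ, ∀ t, fract (α * m t) ∈ Icc (1 / 4 : ℝ) (3 / 4) := by
  have hpos' (t : ℕ) : (0 : ℝ) < m t := by exact_mod_cast hpos t
  have hmono : Monotone (nestedLeft m) :=
    monotone_nat_of_le_succ fun t => le_quarterPoint _ (hpos' (t + 1))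
  have hanti : Antitone fun t => nestedLeft m t + 1 / (2 * m t) := by
    refine antitone_nat_of_succ_le fun t => (quarterPoint_add_le _ (hpos' (t + 1))).trans ?_
    have : 3 * (m t : ℝ) ≤ m (t + 1) := by exact_mod_cast hgrow t
    gcongr nestedLeft m t + ?_
    rw [div_le_div_iff₀ (by linarith [hpos' (t + 1)]) (by linarith [hpos' t])]
    linarith
  have hle : nestedLeft m ≤ fun t => nestedLeft m t + 1 / (2 * m t) :=
    fun t => le_add_of_nonneg_right (by positivity)
  refine ⟨⨆ t, nestedLeft m t, fun t => ?_⟩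
  have hmem := mem_iInter.1 (hmono.ciSup_mem_iInter_Icc_of_antitone hanti hle) t
  cases t with
  | zero => exact fract_mul_mem_Icc_of_mem_Icc_quarterPoint _ (hpos' 0) hmem
  | succ t => exact fract_mul_mem_Icc_of_mem_Icc_quarterPoint _ (hpos' (t + 1)) hmem

lemma fract_sub_notMem_Icc_of_floor_eq {u v : ℝ}
    (h : ⌊4 * fract u⌋₊ = ⌊4 * fract v⌋₊) : fract (u - v) ∉ Icc (1 / 4 : ℝ) (3 / 4) := by
  have hu := Nat.floor_le (by linarith [fract_nonneg u] : 0 ≤ 4 * fract u)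
  have hv := Nat.floor_le (by linarith [fract_nonneg v] : 0 ≤ 4 * fract v)
  have hu' := Nat.lt_floor_add_one (4 * fract u)
  have hv' := Nat.lt_floor_add_one (4 * fract v)
  rw [h] at hu hu'
  have hint : u - v - (fract u - fract v) = ((⌊u⌋ - ⌊v⌋ : ℤ) : ℝ) := by
    rw [Int.cast_sub, ← self_sub_fract, ← self_sub_fract]; ring
  rintro ⟨h₁, h₂⟩
  rcases le_or_gt (fract v) (fract u) with hle | hlt
  · have : fract (u - v) = fract u - fract v :=
      fract_eq_iff.2 ⟨by linarith, by linarith [fract_lt_one u], _, hint⟩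
    linarith
  · have : fract (u - v) = fract u - fract v + 1 :=
      fract_eq_iff.2 ⟨by linarith, by linarith, ⌊u⌋ - ⌊v⌋ - 1, by push_cast at hint ⊢; linarith⟩
    linarith

noncomputable def quarterColor (α : ℝ) (z : ℤ) : Fin 4 :=
  ⟨⌊4 * fract (α * z)⌋₊, (Nat.floor_lt (by linarith [fract_nonneg (α * z)])).2 <| by
    push_cast; linarith [fract_lt_one (α * z)]⟩

lemma distGraph_colorable_four {S : Set ℕ} (α : ℝ)
    (hS : ∀ d ∈ S, fract (α * d) ∈ Icc (1 / 4 : ℝ) (3 / 4)) : (distGraph S).Colorable 4 := by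
  refine ⟨SimpleGraph.Coloring.mk (quarterColor α) fun {x y} hadj hcol => ?_⟩
  have hfloor : ⌊4 * fract (α * x)⌋₊ = ⌊4 * fract (α * y)⌋₊ := congrArg Fin.val hcol
  have hd := hS _ hadj.2
  rw [Nat.cast_natAbs, Int.cast_abs, Int.cast_sub] at hd
  rcases abs_choice ((x : ℝ) - y) with h | h
  · rw [h, mul_sub] at hd
    exact fract_sub_notMem_Icc_of_floor_eq hfloor hd
  · rw [h, neg_sub, mul_sub] at hd
    exact fract_sub_notMem_Icc_of_floor_eq hfloor.symm hd

lemma distGraph_colorable_pow_of_subset_iUnion {ι : Type*} [Fintype ι] {c : ℕ} {T : Set ℕ}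
    (S : ι → Set ℕ) (hT : T ⊆ ⋃ i, S i) (hS : ∀ i, (distGraph (S i)).Colorable c) :
    (distGraph T).Colorable (c ^ Fintype.card ι) := by
  classical
  let C (i : ι) := (hS i).some
  let D : (distGraph T).Coloring (ι → Fin c) :=
    SimpleGraph.Coloring.mk (fun z i => C i z) fun {x y} hadj hxy => by
      obtain ⟨i, hi⟩ := mem_iUnion.1 (hT hadj.2)
      exact (C i).valid ⟨hadj.1, hi⟩ (congrFun hxy i)
  simpa using D.colorable

section Lacunary

variable {n : ℕ → ℕ}

lemma pow_mul_le_of_lacunary {r : ℝ} (hr : 0 ≤ r) (hlac : ∀ j, 1 ≤ j → r * n j ≤ n (j + 1))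
    (t : ℕ) {j : ℕ} (hj : 1 ≤ j) : r ^ t * n j ≤ n (j + t) := by
  induction t with
  | zero => simp
  | succ t ih =>
    calc r ^ (t + 1) * n j = r * (r ^ t * n j) := by ring
      _ ≤ r * n (j + t) := mul_le_mul_of_nonneg_left ih hr
      _ ≤ n (j + t + 1) := hlac _ (by omega)

lemma three_mul_le_of_lacunary {ε : ℝ} (hε : 0 < ε)
    (hlac : ∀ j, 1 ≤ j → (1 + ε) * n j < n (j + 1)) {j : ℕ} (hj : 1 ≤ j) :
    3 * n j ≤ n (j + ⌈2 * ε⁻¹⌉₊) := by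
  have hKε : 2 ≤ ⌈2 * ε⁻¹⌉₊ * ε := by
    have := mul_le_mul_of_nonneg_right (Nat.le_ceil (2 * ε⁻¹)) hε.le
    rwa [mul_assoc, inv_mul_cancel₀ hε.ne', mul_one] at this
  have hpow : (3 : ℝ) ≤ (1 + ε) ^ ⌈2 * ε⁻¹⌉₊ := by
    linarith [one_add_mul_le_pow (by linarith : (-2 : ℝ) ≤ ε) ⌈2 * ε⁻¹⌉₊]
  have := pow_mul_le_of_lacunary (by linarith) (fun j hj => (hlac j hj).le) ⌈2 * ε⁻¹⌉₊ hj
  exact_mod_cast (mul_le_mul_of_nonneg_right hpow (Nat.cast_nonneg _)).trans this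

end Lacunary

lemma setOf_exists_eq_subset_iUnion_range (n : ℕ → ℕ) {K : ℕ} (hK : 0 < K) :
    {k | ∃ j, 1 ≤ j ∧ n j = k} ⊆ ⋃ i : Fin K, range fun t => n (i + 1 + t * K) := by
  rintro _ ⟨j, hj, rfl⟩
  refine mem_iUnion.2 ⟨⟨(j - 1) % K, Nat.mod_lt _ hK⟩, (j - 1) / K, ?_⟩
  show n _ = n j
  have := Nat.mod_add_div' (j - 1) K
  congr 1
  dsimp only
  omega

/-- For any lacunary sequence with ratio `1 + ε`, the chromatic number of the associated
distance graph is at most `4 ^ K` where `K = ⌈2 / ε⌉`; in particular it is finite. -/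
theorem chromatic_number_finite_easy
    (ε : ℝ) (hε : 0 < ε)
    (n : ℕ → ℕ) (hpos : ∀ j, 1 ≤ j → 0 < n j)
    (hlac : ∀ j, 1 ≤ j → (1 + ε) * (n j : ℝ) < (n (j + 1) : ℝ)) :
    (distGraph {k : ℕ | ∃ j, 1 ≤ j ∧ n j = k}).chromaticNumber ≤
      ((4 : ℕ) ^ ⌈2 * ε⁻¹⌉₊ : ℕ∞) := by
  set K := ⌈2 * ε⁻¹⌉₊
  have hK : 0 < K := Nat.ceil_pos.2 (by positivity)
  have hcol (i : Fin K) : (distGraph (range fun t => n (i + 1 + t * K))).Colorable 4 := by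
    have hgrow (t : ℕ) : 3 * n (i + 1 + t * K) ≤ n (i + 1 + (t + 1) * K) := by
      rw [show i + 1 + (t + 1) * K = i + 1 + t * K + K by ring]
      exact_mod_cast three_mul_le_of_lacunary hε hlac (by omega)
    obtain ⟨α, hα⟩ := exists_fract_mul_mem_Icc_of_three_mul_le (fun t => hpos _ (by omega)) hgrow
    exact distGraph_colorable_four α (by rintro _ ⟨t, rfl⟩; exact hα t)
  have := (distGraph_colorable_pow_of_subset_iUnion _
    (setOf_exists_eq_subset_iUnion_range n hK) hcol).chromaticNumber_le
  simpa using this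
end

section
/- There exists a universal constant c > 0 such that for every real ε with 0 < ε < 1/4 and every sequence (n_j)_{j≥1} of positive integers satisfying n_{j+1} ≥ (1+ε)·n_j for all j ≥ 1, there exists a set A ⊆ ℤ with upper density D*(A) = limsup_{N→∞} |A ∩ [−N, N]| / (2N+1) ≥ c·ε·|log ε|⁻¹ such that (A − A) ∩ {n_j : j ≥ 1} = ∅, i.e. no difference of two elements of A equals any n_j. -/
/-!
The set `A` is the Bohr set `{a : ‖a x‖ < δ/2}` with `δ = ε / (1024 |log ε|)`, whose
differences `b` all satisfy `‖b x‖ < δ`; so it suffices to find `x` with `‖n_j x‖ ≥ δ` for every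
`j`. Whatever `x` is, pigeonholing the fractional parts of `a x`, `0 ≤ a ≤ N`, into `⌈2/δ⌉`
bins puts at least `δN/3` elements of the Bohr set into `[-N, N]`.

The point `x` lies in a Cantor-type intersection of `D`-adic cells, `D ≈ 1/δ`. From level `t` to
level `t + 1` we delete the cells meeting the `δ/n_j`-neighbourhood of `(1/n_j)ℤ` for the `j` with
`δ D^t ≤ n_j < δ D^(t+1)`; by lacunarity there are at most `W ≈ log D / ε ≈ |log ε| / ε` of them.
Inside a cell of level `t - 1`, which has length at least `1/n_j`, each such `j` deletes at most
`12 δ D²` cells of level `t + 1`. As `12 δ W ≤ 1/4`, each level keeps at least `D/2` times as many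
cells as the previous one, so all levels are nonempty and compactness gives `x`.
-/

open Finset
open scoped Classical

lemma ncard_inter_Icc_div_le_one (A : Set ℤ) (N : ℕ) :
    ((A ∩ Set.Icc (-(N : ℤ)) N).ncard : ℝ) / (2 * N + 1) ≤ 1 := by
  rw [div_le_one (by positivity)]
  have h := Set.ncard_le_ncard (Set.inter_subset_right (s := A)) (Set.finite_Icc (-(N : ℤ)) N)
  rw [← coe_Icc, Set.ncard_coe_finset, Int.card_Icc] at h
  exact_mod_cast h.trans (by omega)

def bohrSet (δ x : ℝ) : Set ℤ := {a | ∃ k : ℤ, |a * x - k| < δ / 2}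

namespace bohrSet

variable {δ x : ℝ}

lemma exists_abs_sub_lt {a b : ℤ} (ha : a ∈ bohrSet δ x) (hb : b ∈ bohrSet δ x) :
    ∃ k : ℤ, |((a - b : ℤ) : ℝ) * x - k| < δ := by
  obtain ⟨k, hk⟩ := ha
  obtain ⟨k', hk'⟩ := hb
  refine ⟨k - k', ?_⟩
  calc |((a - b : ℤ) : ℝ) * x - (k - k' : ℤ)| = |(a * x - k) - (b * x - k')| := by
        push_cast; ring_nf
    _ ≤ |a * x - k| + |b * x - k'| := abs_sub _ _
    _ < δ := by linarith

lemma sub_mem_of_floor_eq {K : ℕ} (hK : 2 ≤ δ * K) {a b : ℤ}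
    (h : ⌊K * Int.fract (a * x)⌋ = ⌊K * Int.fract (b * x)⌋) : a - b ∈ bohrSet δ x := by
  have hK0 : (0 : ℝ) < K := Nat.cast_pos.2 <| Nat.pos_of_ne_zero <| by rintro rfl; norm_num at hK
  refine ⟨⌊a * x⌋ - ⌊b * x⌋, ?_⟩
  have hfract : ((a - b : ℤ) : ℝ) * x - (⌊a * x⌋ - ⌊b * x⌋ : ℤ)
      = Int.fract (a * x) - Int.fract (b * x) := by
    push_cast; rw [Int.fract, Int.fract]; ring
  have hlt : K * |Int.fract (a * x) - Int.fract (b * x)| < 1 := by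
    have := Int.abs_sub_lt_one_of_floor_eq_floor h
    rwa [← mul_sub, abs_mul, abs_of_pos hK0] at this
  rw [hfract]
  nlinarith

lemma density_ge (hδ : 0 < δ) (hδ1 : δ ≤ 1) (N : ℕ) :
    δ / 6 ≤ ((bohrSet δ x ∩ Set.Icc (-(N : ℤ)) N).ncard : ℝ) / (2 * N + 1) := by
  set K := ⌈2 / δ⌉₊
  have hK : 2 / δ ≤ K := Nat.le_ceil _
  have hK' : (K : ℝ) ≤ 3 / δ := by
    have := Nat.ceil_lt_add_one (a := 2 / δ) (by positivity)
    have : 1 ≤ 1 / δ := by rw [le_div_iff₀ hδ]; linarith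
    have : 2 / δ + 1 / δ = 3 / δ := by ring
    linarith
  have hK0 : (0 : ℝ) < K := lt_of_lt_of_le (by positivity) hK
  have hδK : 2 ≤ δ * K := by rwa [div_le_iff₀' hδ] at hK
  obtain ⟨r, -, hr⟩ := exists_le_card_fiber_of_nsmul_le_card_of_maps_to
    (s := Icc (0 : ℤ) N) (t := Ico (0 : ℤ) K) (b := ((N + 1 : ℕ) : ℝ) / K)
    (f := fun a => ⌊K * Int.fract (a * x)⌋)
    (fun a _ => mem_Ico.2 ⟨Int.floor_nonneg.2 (by positivity),
      Int.floor_lt.2 (by push_cast; nlinarith [Int.fract_lt_one (a * x)])⟩)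
    ⟨0, by simpa using hK0⟩
    (by simp [nsmul_eq_mul, mul_div_cancel₀ _ hK0.ne'])
  set S : Finset ℤ := {a ∈ Icc (0 : ℤ) N | ⌊K * Int.fract (a * x)⌋ = r}
  obtain ⟨a₀, ha₀⟩ : S.Nonempty := by
    rw [← card_pos, ← Nat.cast_pos (α := ℝ)]; exact lt_of_lt_of_le (by positivity) hr
  have hsub : (S.image (· - a₀) : Set ℤ) ⊆ bohrSet δ x ∩ Set.Icc (-(N : ℤ)) N := by
    simp only [coe_image, Set.image_subset_iff]
    intro a ha
    rw [mem_coe] at ha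
    simp only [S, mem_filter, mem_Icc] at ha ha₀
    exact ⟨sub_mem_of_floor_eq hδK (ha.2.trans ha₀.2.symm), by simp; omega⟩
  have hcard : (S.card : ℝ) ≤ (bohrSet δ x ∩ Set.Icc (-(N : ℤ)) N).ncard := by
    have := Set.ncard_le_ncard hsub ((Set.finite_Icc _ _).inter_of_right _)
    rw [Set.ncard_coe_finset, card_image_of_injective _ (sub_left_injective)] at this
    exact_mod_cast this
  rw [le_div_iff₀ (by positivity)]
  calc δ / 6 * (2 * N + 1) ≤ (N + 1) / (3 / δ) := by
        rw [div_div_eq_mul_div]; nlinarith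
    _ ≤ ((N + 1 : ℕ) : ℝ) / K := by push_cast; gcongr
    _ ≤ _ := hr.trans hcard

lemma le_limsup_density (hδ : 0 < δ) (hδ1 : δ ≤ 1) :
    δ / 6 ≤ Filter.limsup
      (fun N : ℕ => ((bohrSet δ x ∩ Set.Icc (-(N : ℤ)) (N : ℤ)).ncard : ℝ) / (2 * N + 1))
      Filter.atTop :=
  Filter.le_limsup_of_frequently_le (Filter.Frequently.of_forall (density_ge hδ hδ1))
    (Filter.isBoundedUnder_of ⟨1, ncard_inter_Icc_div_le_one _⟩)

end bohrSet

lemma Int.card_le_of_forall_mem_Icc {S : Finset ℤ} {α β : ℝ}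
    (h : ∀ k ∈ S, α ≤ k ∧ k ≤ β) (hαβ : α ≤ β + 1) : (#S : ℝ) ≤ β - α + 1 := by
  have hsub : S ⊆ Icc ⌈α⌉ ⌊β⌋ := fun k hk =>
    mem_Icc.2 ⟨Int.ceil_le.2 (h k hk).1, Int.le_floor.2 (h k hk).2⟩
  have hcard : (#(Icc ⌈α⌉ ⌊β⌋) : ℝ) = max ((⌊β⌋ + 1 - ⌈α⌉ : ℤ) : ℝ) 0 := by
    rw [Int.card_Icc, ← Int.cast_natCast, Int.toNat_eq_max]; push_cast; rfl
  calc (#S : ℝ) ≤ #(Icc ⌈α⌉ ⌊β⌋) := by exact_mod_cast card_le_card hsub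
    _ ≤ β - α + 1 := by
      rw [hcard]; push_cast
      exact max_le (by linarith [Int.floor_le β, Int.le_ceil α]) (by linarith)

lemma Nat.card_le_of_forall_mem_Icc {S : Finset ℕ} {α β : ℝ}
    (h : ∀ i ∈ S, α ≤ i ∧ i ≤ β) (hαβ : α ≤ β + 1) : (#S : ℝ) ≤ β - α + 1 := by
  rw [← card_map (Nat.castEmbedding : ℕ ↪ ℤ)]
  exact Int.card_le_of_forall_mem_Icc (by simpa using h) hαβ

/-- The cell `[i/u, (i+1)/u]` meets the closed `δ/m`-neighbourhood of `(1/m)ℤ`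
(stated without division, for `u, m > 0`). -/
def CellMeetsNbhd (δ : ℝ) (m : ℕ) (u : ℝ) (i : ℕ) : Prop :=
  ∃ k : ℤ, (i : ℝ) * m ≤ (k + δ) * u ∧ (k - δ) * u ≤ (i + 1) * m

lemma card_filter_cellMeetsNbhd_le {δ u : ℝ} {m : ℕ} (hδ : 0 < δ) (hδ2 : δ ≤ 1 / 2)
    (hm : 0 < m) (hmu : m ≤ δ * u) (a L : ℕ) (hL : u ≤ m * L) :
    (#{i ∈ Ico a (a + L) | CellMeetsNbhd δ m u i} : ℝ) ≤ 12 * δ * L := by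
  have hm0 : (0 : ℝ) < m := by exact_mod_cast hm
  set ρ := u / m with hρ
  have hu : u = ρ * m := by rw [hρ, div_mul_cancel₀ _ hm0.ne']
  have hρδ : 1 ≤ δ * ρ := by rw [hu] at hmu; nlinarith
  have hρ0 : 0 < ρ := by nlinarith
  have hLρ : 1 ≤ L / ρ := by rw [le_div_iff₀ hρ0]; rw [hu] at hL; nlinarith
  set K := Icc ⌈a / ρ - δ⌉ ⌊(a + L) / ρ + δ⌋
  set inner : ℤ → Finset ℕ := fun k => {i ∈ Ico a (a + L) | (k - δ) * ρ - 1 ≤ i ∧ i ≤ (k + δ) * ρ}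
  have hsub : {i ∈ Ico a (a + L) | CellMeetsNbhd δ m u i} ⊆ K.biUnion inner := by
    intro i hi
    obtain ⟨hi, k, hk₁, hk₂⟩ := mem_filter.1 hi
    rw [hu] at hk₁ hk₂
    have hai : (a : ℝ) ≤ i ∧ (i : ℝ) + 1 ≤ a + L := by
      have := mem_Ico.1 hi; exact ⟨by exact_mod_cast this.1, by exact_mod_cast this.2⟩
    have hk₁' : i ≤ (k + δ) * ρ := by nlinarith
    have hk₂' : (k - δ) * ρ ≤ i + 1 := by nlinarith
    refine mem_biUnion.2 ⟨k, mem_Icc.2 ⟨Int.ceil_le.2 ?_, Int.le_floor.2 ?_⟩,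
      mem_filter.2 ⟨hi, by linarith, hk₁'⟩⟩
    · rw [sub_le_iff_le_add, div_le_iff₀ hρ0]; linarith
    · rw [← sub_le_iff_le_add, le_div_iff₀ hρ0]; linarith
  have hK : (#K : ℝ) ≤ 3 * (L / ρ) := by
    have := Int.card_le_of_forall_mem_Icc (S := K) (fun k hk => by
      obtain ⟨h₁, h₂⟩ := mem_Icc.1 hk
      exact ⟨(Int.le_ceil _).trans (by exact_mod_cast h₁),
        (Int.cast_le.2 h₂).trans (Int.floor_le _)⟩) (by
      have : (a : ℝ) / ρ ≤ (a + L) / ρ := by gcongr; linarith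
      linarith)
    have : ((a : ℝ) + L) / ρ = a / ρ + L / ρ := add_div _ _ _
    linarith
  have hinner : ∀ k ∈ K, (#(inner k) : ℝ) ≤ 4 * (δ * ρ) := by
    intro k _
    have := Nat.card_le_of_forall_mem_Icc (S := inner k) (fun i hi => (mem_filter.1 hi).2)
      (by nlinarith)
    linarith
  calc (#{i ∈ Ico a (a + L) | CellMeetsNbhd δ m u i} : ℝ)
      ≤ ∑ k ∈ K, (#(inner k) : ℝ) := by exact_mod_cast (card_le_card hsub).trans card_biUnion_le
    _ ≤ #K * (4 * (δ * ρ)) := by rw [← nsmul_eq_mul]; exact sum_le_card_nsmul _ _ _ hinner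
    _ ≤ 3 * (L / ρ) * (4 * (δ * ρ)) := by gcongr
    _ = 12 * δ * L := by field_simp; ring

def children (D : ℕ) (S : Finset ℕ) : Finset ℕ := S.biUnion fun p => Ico (p * D) (p * D + D)

section children

variable {D : ℕ} {S : Finset ℕ}

lemma mem_Ico_mul_iff_div_eq (hD : 0 < D) {i p : ℕ} : i ∈ Ico (p * D) (p * D + D) ↔ i / D = p := by
  rw [mem_Ico, Nat.div_eq_iff hD]; omega

lemma mem_children (hD : 0 < D) {i : ℕ} : i ∈ children D S ↔ i / D ∈ S := by
  simp only [children, mem_biUnion, mem_Ico_mul_iff_div_eq hD, exists_eq_right']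

lemma card_children (hD : 0 < D) : #(children D S) = D * #S := by
  rw [children, card_biUnion, sum_const_nat (m := D) (fun p _ => by simp), mul_comm]
  intro p _ q _ hpq
  refine disjoint_left.2 fun i hp hq => hpq ?_
  rw [mem_Ico_mul_iff_div_eq hD] at hp hq
  exact hp.symm.trans hq

end children

def cell (u : ℝ) (i : ℕ) : Set ℝ := Set.Icc (i / u) ((i + 1) / u)

lemma cell_subset_cell_div {u : ℝ} {D : ℕ} (hu : 0 < u) (hD : 0 < D) (i : ℕ) :
    cell (u * D) i ⊆ cell u (i / D) := by
  have hD' : (0 : ℝ) < D := by exact_mod_cast hD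
  have h₁ : ((i / D : ℕ) : ℝ) * D ≤ i := by exact_mod_cast Nat.div_mul_le_self i D
  have h₂ : (i : ℝ) + 1 ≤ ((i / D : ℕ) + 1) * D := by
    have := Nat.lt_div_mul_add (a := i) hD
    exact_mod_cast (by rw [add_mul, one_mul]; omega : i + 1 ≤ (i / D + 1) * D)
  refine Set.Icc_subset_Icc ?_ ?_
  · rw [div_le_div_iff₀ hu (by positivity)]; nlinarith
  · rw [div_le_div_iff₀ (by positivity) hu]; nlinarith

lemma cellMeetsNbhd_of_mem_cell {δ u x : ℝ} {m i : ℕ} {k : ℤ} (hu : 0 < u) (hm : 0 < m)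
    (hx : x ∈ cell u i) (hk : |m * x - k| < δ) : CellMeetsNbhd δ m u i := by
  have hm' : (0 : ℝ) < m := by exact_mod_cast hm
  obtain ⟨hx₁, hx₂⟩ := hx
  rw [div_le_iff₀ hu] at hx₁
  rw [le_div_iff₀ hu] at hx₂
  obtain ⟨hk₁, hk₂⟩ := abs_lt.1 hk
  exact ⟨k, by nlinarith, by nlinarith⟩

section Cantor

variable {ι : Type*} (δ : ℝ) (m : ι → ℕ) (D : ℕ)

def InWindow (t : ℕ) (j : ι) : Prop := δ * D ^ t ≤ m j ∧ (m j : ℝ) < δ * D ^ (t + 1)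

noncomputable def survivors : ℕ → Finset ℕ
  | 0 => {0}
  | t + 1 => {i ∈ children D (survivors t) |
      ∀ j, InWindow δ m D t j → ¬ CellMeetsNbhd δ (m j) (D ^ (t + 1)) i}

def cantorLevel (t : ℕ) : Set ℝ := ⋃ i ∈ survivors δ m D t, cell (D ^ t) i

variable {δ m D}

lemma div_pow_mem_survivors (hD : 0 < D) {s : ℕ} :
    ∀ {e i : ℕ}, i ∈ survivors δ m D (s + e) → i / D ^ e ∈ survivors δ m D s
  | 0, i, hi => by simpa using hi
  | e + 1, i, hi => by
    have := div_pow_mem_survivors hD ((mem_children hD).1 (mem_filter.1 hi).1)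
    rwa [Nat.div_div_eq_div_mul, ← pow_succ'] at this

lemma isCompact_cantorLevel (t : ℕ) : IsCompact (cantorLevel δ m D t) :=
  (survivors δ m D t).finite_toSet.isCompact_biUnion fun _ _ => isCompact_Icc

lemma cantorLevel_succ_subset (hD : 0 < D) (t : ℕ) :
    cantorLevel δ m D (t + 1) ⊆ cantorLevel δ m D t := by
  simp only [cantorLevel, Set.iUnion₂_subset_iff]
  intro i hi
  refine (pow_succ (D : ℝ) t ▸ cell_subset_cell_div (by positivity) hD i).trans ?_
  exact Set.subset_biUnion_of_mem (u := fun i => cell (D ^ t) i)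
    ((mem_children hD).1 (mem_filter.1 hi).1)

lemma cantorLevel_nonempty {t : ℕ} (h : (survivors δ m D t).Nonempty) :
    (cantorLevel δ m D t).Nonempty := by
  obtain ⟨i, hi⟩ := h
  refine ⟨i / D ^ t, Set.mem_biUnion hi ⟨le_rfl, ?_⟩⟩
  gcongr
  linarith

lemma card_filter_children_meets_le (hδ : 0 < δ) (hδ2 : δ ≤ 1 / 2) (hD : 0 < D) {s e : ℕ}
    {j : ι} (hj : InWindow δ m D (s + e) j) (hs : (D : ℝ) ^ s ≤ m j) :
    (#{i ∈ children D (survivors δ m D (s + e)) |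
        CellMeetsNbhd δ (m j) (D ^ (s + e + 1)) i} : ℝ)
      ≤ 12 * δ * D ^ (e + 1) * #(survivors δ m D s) := by
  set M := D ^ (e + 1)
  have hsub : {i ∈ children D (survivors δ m D (s + e)) |
        CellMeetsNbhd δ (m j) (D ^ (s + e + 1)) i} ⊆ (survivors δ m D s).biUnion
      fun g => {i ∈ Ico (g * M) (g * M + M) | CellMeetsNbhd δ (m j) (D ^ (s + e + 1)) i} := by
    intro i hi
    obtain ⟨hi, hmeet⟩ := mem_filter.1 hi
    have hg := div_pow_mem_survivors hD ((mem_children hD).1 hi)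
    rw [Nat.div_div_eq_div_mul, ← pow_succ'] at hg
    exact mem_biUnion.2 ⟨_, hg, mem_filter.2
      ⟨(mem_Ico_mul_iff_div_eq (by positivity)).2 rfl, hmeet⟩⟩
  have hmj : 0 < m j := by exact_mod_cast (pow_pos (Nat.cast_pos.2 hD) s).trans_le hs
  have hL : (D : ℝ) ^ (s + e + 1) ≤ m j * (M : ℕ) := by
    rw [Nat.cast_pow, add_assoc, pow_add]; gcongr
  calc (#{i ∈ children D (survivors δ m D (s + e)) |
          CellMeetsNbhd δ (m j) (D ^ (s + e + 1)) i} : ℝ)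
      ≤ ∑ g ∈ survivors δ m D s,
          (#{i ∈ Ico (g * M) (g * M + M) | CellMeetsNbhd δ (m j) (D ^ (s + e + 1)) i} : ℝ) := by
        exact_mod_cast (card_le_card hsub).trans card_biUnion_le
    _ ≤ ∑ g ∈ survivors δ m D s, 12 * δ * (M : ℕ) :=
        sum_le_sum fun g _ => card_filter_cellMeetsNbhd_le hδ hδ2 hmj hj.2.le _ _ hL
    _ = 12 * δ * D ^ (e + 1) * #(survivors δ m D s) := by
        rw [sum_const, nsmul_eq_mul]; simp only [M, Nat.cast_pow]; ring

lemma card_survivors_add_le (hδ : 0 < δ) (hδ2 : δ ≤ 1 / 2) (hD : 0 < D) {s e W : ℕ}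
    {J : Finset ι} (hJ : #J ≤ W) (hwin : ∀ j, InWindow δ m D (s + e) j → j ∈ J)
    (hs : ∀ j, InWindow δ m D (s + e) j → (D : ℝ) ^ s ≤ m j) :
    (D : ℝ) * #(survivors δ m D (s + e))
      ≤ #(survivors δ m D (s + e + 1)) + W * (12 * δ * D ^ (e + 1) * #(survivors δ m D s)) := by
  set J' := {j ∈ J | InWindow δ m D (s + e) j}
  set bad := fun j => {i ∈ children D (survivors δ m D (s + e)) |
    CellMeetsNbhd δ (m j) (D ^ (s + e + 1)) i}
  have hsub : children D (survivors δ m D (s + e))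
      ⊆ survivors δ m D (s + e + 1) ∪ J'.biUnion bad := by
    intro i hi
    by_cases hgood : ∀ j, InWindow δ m D (s + e) j → ¬ CellMeetsNbhd δ (m j) (D ^ (s + e + 1)) i
    · exact mem_union_left _ (mem_filter.2 ⟨hi, hgood⟩)
    · push Not at hgood
      obtain ⟨j, hj, hmeet⟩ := hgood
      exact mem_union_right _ (mem_biUnion.2
        ⟨j, mem_filter.2 ⟨hwin j hj, hj⟩, mem_filter.2 ⟨hi, hmeet⟩⟩)
  have hJ' : (#J' : ℝ) ≤ W := by exact_mod_cast (card_filter_le _ _).trans hJ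
  calc (D : ℝ) * #(survivors δ m D (s + e))
      = #(children D (survivors δ m D (s + e))) := by rw [card_children hD]; push_cast; rfl
    _ ≤ #(survivors δ m D (s + e + 1)) + ∑ j ∈ J', (#(bad j) : ℝ) := by
        exact_mod_cast (card_le_card hsub).trans
          ((card_union_le _ _).trans (Nat.add_le_add_left card_biUnion_le _))
    _ ≤ #(survivors δ m D (s + e + 1)) + #J' * (12 * δ * D ^ (e + 1) * #(survivors δ m D s)) := by
        rw [← nsmul_eq_mul]
        gcongr
        exact sum_le_card_nsmul _ _ _ fun j hj =>
          card_filter_children_meets_le hδ hδ2 hD (mem_filter.1 hj).2 (hs j (mem_filter.1 hj).2)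
    _ ≤ _ := by gcongr

lemma card_survivors_succ_ge (hδ : 0 < δ) (hδ2 : δ ≤ 1 / 2) (hδD : 1 ≤ δ * D)
    (hm : ∀ j, 0 < m j) {W : ℕ}
    (hwin : ∀ t, ∃ J : Finset ι, #J ≤ W ∧ ∀ j, InWindow δ m D t j → j ∈ J)
    (hW : 48 * δ * W ≤ 1) :
    ∀ t, (D : ℝ) * #(survivors δ m D t) ≤ 2 * #(survivors δ m D (t + 1)) := by
  have hD' : (0 : ℝ) < D := pos_of_mul_pos_right (one_pos.trans_le hδD) hδ.le
  have hD : 0 < D := Nat.cast_pos.1 hD'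
  have hbad : ∀ y z : ℝ, 0 ≤ y * z → W * (12 * δ * y * z) ≤ y * z / 4 := fun y z hyz => by
    nlinarith
  intro t
  induction t with
  | zero =>
    obtain ⟨J, hJ, hJwin⟩ := hwin 0
    have := card_survivors_add_le (s := 0) (e := 0) hδ hδ2 hD hJ hJwin
      fun j _ => by rw [pow_zero]; exact_mod_cast hm j
    simp only [survivors, card_singleton, Nat.cast_one, zero_add, pow_one, mul_one] at this ⊢
    linarith [hbad D 1 (by positivity)]
  | succ t ih =>
    obtain ⟨J, hJ, hJwin⟩ := hwin (t + 1)
    have := card_survivors_add_le (s := t) (e := 1) hδ hδ2 hD hJ hJwin fun j hj =>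
      calc (D : ℝ) ^ t ≤ δ * D * D ^ t := le_mul_of_one_le_left (by positivity) hδD
        _ = δ * D ^ (t + 1) := by ring
        _ ≤ m j := hj.1
    rw [show (D : ℝ) ^ (1 + 1) = D ^ 2 by norm_num] at this
    have := hbad (D ^ 2) #(survivors δ m D t) (by positivity)
    have : (D : ℝ) ^ 2 * #(survivors δ m D t) ≤ D * (2 * #(survivors δ m D (t + 1))) := by
      rw [sq, mul_assoc]; gcongr
    linarith

lemma survivors_nonempty (hδ : 0 < δ) (hδ2 : δ ≤ 1 / 2) (hδD : 1 ≤ δ * D)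
    (hm : ∀ j, 0 < m j) {W : ℕ}
    (hwin : ∀ t, ∃ J : Finset ι, #J ≤ W ∧ ∀ j, InWindow δ m D t j → j ∈ J)
    (hW : 48 * δ * W ≤ 1) (t : ℕ) : (survivors δ m D t).Nonempty := by
  induction t with
  | zero => exact singleton_nonempty 0
  | succ t ih =>
    have hD : (0 : ℝ) < D := pos_of_mul_pos_right (one_pos.trans_le hδD) hδ.le
    have := card_survivors_succ_ge hδ hδ2 hδD hm hwin hW t
    have := card_pos.2 ih
    rw [← card_pos, ← Nat.cast_pos (α := ℝ)]
    nlinarith [(Nat.cast_pos (α := ℝ)).2 this]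

theorem exists_forall_le_abs_mul_sub (hδ : 0 < δ) (hδ2 : δ ≤ 1 / 2) (hδD : 1 ≤ δ * D)
    (hm : ∀ j, 0 < m j) {W : ℕ}
    (hwin : ∀ t, ∃ J : Finset ι, #J ≤ W ∧ ∀ j, InWindow δ m D t j → j ∈ J)
    (hW : 48 * δ * W ≤ 1) :
    ∃ x : ℝ, ∀ j, ∀ k : ℤ, δ ≤ |m j * x - k| := by
  have hD1 : (1 : ℝ) < D := by nlinarith
  have hD : 0 < D := by exact_mod_cast hD1.trans' one_pos
  obtain ⟨x, hx⟩ := IsCompact.nonempty_iInter_of_sequence_nonempty_isCompact_isClosed _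
    (cantorLevel_succ_subset hD)
    (fun t => cantorLevel_nonempty (survivors_nonempty hδ hδ2 hδD hm hwin hW t))
    (isCompact_cantorLevel 0) fun t => (isCompact_cantorLevel t).isClosed
  refine ⟨x, fun j k => ?_⟩
  have hmj : (1 : ℝ) ≤ m j := by exact_mod_cast hm j
  obtain ⟨t, ht₁, ht₂⟩ := exists_nat_pow_near (x := (m j : ℝ) / δ)
    (by rw [le_div_iff₀ hδ]; linarith) hD1
  have hj : InWindow δ m D t j := by
    constructor
    · rwa [le_div_iff₀' hδ] at ht₁
    · rwa [div_lt_iff₀' hδ] at ht₂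
  obtain ⟨i, hi, hxi⟩ := Set.mem_iUnion₂.1 (Set.mem_iInter.1 hx (t + 1))
  by_contra! hk
  exact (mem_filter.1 hi).2 j hj (cellMeetsNbhd_of_mem_cell (by positivity) (hm j) hxi hk)

end Cantor

lemma Nat.exists_finset_card_le_of_forall_lt_add {P : ℕ → Prop} {W : ℕ}
    (h : ∀ i j, P i → P j → i ≤ j → j < i + W) : ∃ J : Finset ℕ, #J ≤ W ∧ ∀ j, P j → j ∈ J := by
  by_cases hP : ∃ j, P j
  · refine ⟨Ico (Nat.find hP) (Nat.find hP + W), by simp, fun j hj => mem_Ico.2 ?_⟩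
    exact ⟨Nat.find_min' hP hj, h _ _ (Nat.find_spec hP) hj (Nat.find_min' hP hj)⟩
  · push Not at hP
    exact ⟨∅, by simp, fun j hj => (hP j hj).elim⟩

section Lacunary

variable {ε : ℝ} {m : ℕ → ℕ}

lemma pow_mul_le_of_lacunary_s12 (hε : 0 ≤ ε) (hlac : ∀ j, (1 + ε) * m j ≤ m (j + 1)) (j : ℕ) :
    ∀ e, (1 + ε) ^ e * m j ≤ m (j + e)
  | 0 => by simp
  | e + 1 =>
    calc (1 + ε) ^ (e + 1) * m j = (1 + ε) * ((1 + ε) ^ e * m j) := by ring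
      _ ≤ (1 + ε) * m (j + e) := by gcongr; exact pow_mul_le_of_lacunary_s12 hε hlac j e
      _ ≤ m (j + (e + 1)) := hlac (j + e)

lemma InWindow.lt_add_of_lacunary {δ : ℝ} {D W t i j : ℕ} (hε : 0 < ε)
    (hlac : ∀ j, (1 + ε) * m j ≤ m (j + 1)) (hDW : (D : ℝ) ≤ (1 + ε) ^ W)
    (hi : InWindow δ m D t i) (hj : InWindow δ m D t j) (hij : i ≤ j) : j < i + W := by
  have hgap : (1 + ε) ^ (j - i) * m i < (1 + ε) ^ W * m i :=
    calc (1 + ε) ^ (j - i) * m i ≤ m j := by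
          simpa [Nat.add_sub_cancel' hij] using pow_mul_le_of_lacunary_s12 hε.le hlac i (j - i)
      _ < δ * D ^ (t + 1) := hj.2
      _ = D * (δ * D ^ t) := by ring
      _ ≤ D * m i := by gcongr; exact hi.1
      _ ≤ (1 + ε) ^ W * m i := by gcongr
  have := (pow_lt_pow_iff_right₀ (by linarith : 1 < 1 + ε)).1
    (lt_of_mul_lt_mul_right hgap (Nat.cast_nonneg _))
  omega

end Lacunary

lemma le_log_one_add {ε : ℝ} (hε : 0 ≤ ε) (hε4 : ε ≤ 1 / 4) : 4 / 5 * ε ≤ Real.log (1 + ε) := by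
  refine le_trans ?_ (Real.one_sub_inv_le_log_of_pos (by linarith))
  rw [le_sub_iff_add_le, ← le_sub_iff_add_le', inv_eq_one_div, div_le_iff₀ (by linarith)]
  nlinarith

lemma abs_log_eq_log_inv {ε : ℝ} (hε : 0 < ε) (hε1 : ε < 1) : |Real.log ε| = Real.log ε⁻¹ := by
  rw [Real.log_inv, abs_of_neg (Real.log_neg hε hε1)]

lemma log_four_lt_abs_log {ε : ℝ} (hε : 0 < ε) (hε4 : ε < 1 / 4) : Real.log 4 < |Real.log ε| := by
  rw [abs_log_eq_log_inv hε (by linarith)]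
  exact Real.log_lt_log (by norm_num) (by rw [lt_inv_comm₀ (by norm_num) hε]; norm_num; linarith)

lemma log_two_div_le {ε δ : ℝ} (hε : 0 < ε) (hε4 : ε < 1 / 4)
    (hδ : δ = ε / (1024 * |Real.log ε|)) : Real.log (2 / δ) ≤ 8 * |Real.log ε| := by
  set L := |Real.log ε|
  have hL : Real.log 4 < L := log_four_lt_abs_log hε hε4
  have hlog4 : Real.log 4 = 2 * Real.log 2 := by
    rw [show (4 : ℝ) = 2 ^ 2 by norm_num, Real.log_pow]; norm_num
  have hL0 : 0 < L := by linarith [Real.log_two_gt_d9]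
  have hεL : Real.log ε⁻¹ = L := (abs_log_eq_log_inv hε (by linarith)).symm
  have h2δ : 2 / δ = 2 ^ 11 * L * ε⁻¹ := by rw [hδ]; field_simp; norm_num
  calc Real.log (2 / δ) = 11 * Real.log 2 + Real.log L + L := by
        rw [h2δ, Real.log_mul (by positivity) (by positivity),
          Real.log_mul (by positivity) (by positivity), Real.log_pow, hεL]
        push_cast; ring
    _ ≤ 8 * L := by linarith [Real.log_le_sub_one_of_pos hL0, Real.log_two_gt_d9]

lemma exists_scales {ε δ : ℝ} (hε : 0 < ε) (hε4 : ε < 1 / 4)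
    (hδ : δ = ε / (1024 * |Real.log ε|)) :
    0 < δ ∧ δ ≤ 1 / 2 ∧ ∃ D W : ℕ, 1 ≤ δ * D ∧ (D : ℝ) ≤ (1 + ε) ^ W ∧ 48 * δ * W ≤ 1 := by
  set L := |Real.log ε|
  have hL : 1 ≤ L := by
    have : 1 < Real.log 4 := by
      rw [Real.lt_log_iff_exp_lt (by norm_num)]; linarith [Real.exp_one_lt_d9]
    linarith [log_four_lt_abs_log hε hε4]
  have hδ0 : 0 < δ := by rw [hδ]; positivity
  have hδ1 : δ ≤ 1 / 4096 := by rw [hδ, div_le_iff₀ (by positivity)]; linarith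
  set D := ⌈δ⁻¹⌉₊
  have hD1 : (1 : ℝ) ≤ D := le_trans (by rw [le_inv_comm₀ one_pos hδ0]; linarith) (Nat.le_ceil _)
  have hlogD : Real.log D ≤ 8 * L := by
    refine le_trans (Real.log_le_log (by linarith) ?_) (log_two_div_le hε hε4 hδ)
    have := Nat.ceil_lt_add_one (inv_nonneg.2 hδ0.le)
    have : 1 ≤ δ⁻¹ := by rw [le_inv_comm₀ one_pos hδ0]; linarith
    rw [div_eq_mul_inv]; linarith
  have hε1 := le_log_one_add hε.le hε4.le
  have hlog0 : 0 < Real.log (1 + ε) := by linarith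
  set W := ⌈Real.log D / Real.log (1 + ε)⌉₊
  have hW : (W : ℝ) ≤ 10 * L / ε + 1 := by
    have := Nat.ceil_lt_add_one (div_nonneg (Real.log_nonneg hD1) hlog0.le)
    have : Real.log D / Real.log (1 + ε) ≤ 8 * L / (4 / 5 * ε) :=
      div_le_div₀ (by positivity) hlogD (by positivity) hε1
    have : 8 * L / (4 / 5 * ε) = 10 * L / ε := by field_simp; ring
    linarith
  refine ⟨hδ0, by linarith, D, W, ?_, ?_, ?_⟩
  · rw [← div_le_iff₀' hδ0, one_div]; exact Nat.le_ceil _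
  · exact Real.pow_le_of_le_log (by linarith) (by rw [← div_le_iff₀ hlog0]; exact Nat.le_ceil _)
  · have hδL : δ * (10 * L / ε) = 10 / 1024 := by rw [hδ]; field_simp
    nlinarith

/-- There is a universal constant `c > 0` such that for every lacunary sequence `(n j)`
with ratio `1 + ε` (`0 < ε < 1/4`) there is a set `A ⊆ ℤ` of upper density at least
`c * ε * |log ε|⁻¹` whose difference set avoids `{n j : j ≥ 1}`. -/
theorem lacunary_not_intersective :
    ∃ c : ℝ, 0 < c ∧
      ∀ ε : ℝ, 0 < ε → ε < 1 / 4 →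
        ∀ n : ℕ → ℕ, (∀ j, 1 ≤ j → 0 < n j) →
          (∀ j, 1 ≤ j → (1 + ε) * (n j : ℝ) ≤ (n (j + 1) : ℝ)) →
          ∃ A : Set ℤ,
            (c * ε * |Real.log ε|⁻¹ ≤
              Filter.limsup
                (fun N : ℕ =>
                  ((A ∩ Set.Icc (-(N : ℤ)) (N : ℤ)).ncard : ℝ) / (2 * N + 1))
                Filter.atTop) ∧
            (∀ a ∈ A, ∀ b ∈ A, ∀ j, 1 ≤ j → a - b ≠ (n j : ℤ)) := by
  refine ⟨1 / 6144, by norm_num, fun ε hε hε4 n hn hlac => ?_⟩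
  set δ := ε / (1024 * |Real.log ε|) with hδ
  obtain ⟨hδ0, hδ2, D, W, hδD, hDW, hW⟩ := exists_scales hε hε4 hδ
  obtain ⟨x, hx⟩ := exists_forall_le_abs_mul_sub (m := fun j => n (j + 1)) hδ0 hδ2 hδD
    (fun j => hn (j + 1) j.succ_pos)
    (fun t => Nat.exists_finset_card_le_of_forall_lt_add fun i j hi hj hij =>
      hi.lt_add_of_lacunary hε (fun j => hlac (j + 1) j.succ_pos) hDW hj hij)
    hW
  refine ⟨bohrSet δ x, ?_, fun a ha b hb j hj hab => ?_⟩
  · calc 1 / 6144 * ε * |Real.log ε|⁻¹ = δ / 6 := by rw [hδ]; field_simp; norm_num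
      _ ≤ _ := bohrSet.le_limsup_density hδ0 (by linarith)
  · obtain ⟨k, hk⟩ := bohrSet.exists_abs_sub_lt ha hb
    have := hx (j - 1) k
    rw [Nat.sub_add_cancel hj] at this
    rw [hab] at hk
    push_cast at hk
    linarith
end
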